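/- Let n ≥ 2. The matrix Δ₀ = (G Gᵀ) ⊗ (H Hᵀ) + (H Hᵀ) ⊗ (G Gᵀ) is symmetric positive definite; its eigenvalues are exactly the numbers λ_i μ_j + μ_i λ_j, 1 ≤ i,j ≤ n-1, where λ_k = 4 sin²(kπ/(2n)) and μ_k = 4 cos²(kπ/(2n)), and all of these numbers are strictly positive. -/

import Mathlib

open Matrix Real
open scoped Kronecker

def Emat (n : ℕ) : Matrix (Fin (n - 1)) (Fin n) ℝ :=
  Matrix.of fun i j => if (j : ℕ) = (i : ℕ) + 1 then 1 else 0

def Zmat (n : ℕ) : Matrix (Fin (n - 1)) (Fin n) ℝ :=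
  Matrix.of fun i j => if (j : ℕ) = (i : ℕ) then 1 else 0

def Gmat (n : ℕ) : Matrix (Fin (n - 1)) (Fin n) ℝ := Emat n - Zmat n

def Hmat (n : ℕ) : Matrix (Fin (n - 1)) (Fin n) ℝ := Emat n + Zmat n

/-- `λ_k = 4 sin²(kπ/(2n))` (1-based `k`). -/
noncomputable def lamGG (n : ℕ) (k : Fin (n - 1)) : ℝ :=
  4 * Real.sin (((k : ℕ) + 1) * Real.pi / (2 * n)) ^ 2

/-- `μ_k = 4 cos²(kπ/(2n))` (1-based `k`). -/
noncomputable def muHH (n : ℕ) (k : Fin (n - 1)) : ℝ :=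
  4 * Real.cos (((k : ℕ) + 1) * Real.pi / (2 * n)) ^ 2

/-!
The vectors `x_k = (sin (j kπ/n))_{1 ≤ j ≤ n-1}` are common eigenvectors of `G Gᵀ` and `H Hᵀ`:
on a sequence vanishing at `0` and `n` these act as `2 ∓ (shift left + shift right)`, and
`sin ((j-1)θ) + sin ((j+1)θ) = 2 cos θ sin (jθ)`, giving the eigenvalues
`2 - 2 cos (kπ/n) = λ_k` and `2 + 2 cos (kπ/n) = μ_k`. The `λ_k` are distinct, so the `x_k` form
a basis, and `U ⊗ U` (with `U = (x_1 ⋯ x_{n-1})`) diagonalizes `Δ₀` with diagonal entries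
`λ_i μ_j + μ_i λ_j > 0`. Being a sum of Kronecker products of Gram matrices, `Δ₀` is positive
semidefinite, and it is invertible, hence positive definite.
-/

section Diagonalization

variable {K ι : Type*} [Field K] [Fintype ι] [DecidableEq ι]

theorem Matrix.isUnit_of_mul_eq_mul_diagonal {M U : Matrix ι ι K} {d : ι → K}
    (hd : Function.Injective d) (hU : ∀ k, U.col k ≠ 0) (h : M * U = U * diagonal d) :
    IsUnit U := by
  refine linearIndependent_cols_iff_isUnit.mp <|
    Module.End.eigenvectors_linearIndependent' M.mulVecLin d hd U.col fun k => ⟨?_, hU k⟩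
  rw [Module.End.mem_eigenspace_iff, mulVecLin_apply]
  ext j
  have hjk := congrFun (congrFun h j) k
  rw [mul_diagonal, mul_apply] at hjk
  simpa [mulVec, dotProduct, mul_comm] using hjk

theorem Matrix.spectrum_eq_range_of_mul_eq_mul_diagonal {M U : Matrix ι ι K} {d : ι → K}
    (hU : IsUnit U) (h : M * U = U * diagonal d) : spectrum K M = Set.range d := by
  obtain ⟨u, rfl⟩ := hU
  have hM : M = u * diagonal d * (↑u⁻¹ : Matrix ι ι K) := by
    rw [← h, Matrix.mul_assoc, Units.mul_inv, Matrix.mul_one]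
  rw [hM, spectrum.units_conjugate, spectrum_diagonal]

end Diagonalization

theorem Matrix.kronecker_add_kronecker_mul_kronecker {R ι : Type*} [CommSemiring R] [Fintype ι]
    [DecidableEq ι] {A B U : Matrix ι ι R} {a b : ι → R}
    (hA : A * U = U * diagonal a) (hB : B * U = U * diagonal b) :
    (A ⊗ₖ B + B ⊗ₖ A) * (U ⊗ₖ U) =
      (U ⊗ₖ U) * diagonal fun p : ι × ι => a p.1 * b p.2 + b p.1 * a p.2 := by
  rw [Matrix.add_mul, ← mul_kronecker_mul, ← mul_kronecker_mul, hA, hB, mul_kronecker_mul,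
    mul_kronecker_mul, diagonal_kronecker_diagonal, diagonal_kronecker_diagonal, ← Matrix.mul_add,
    diagonal_add]

lemma posSemidef_self_mul_transpose {m k : Type*} [Fintype m] [Fintype k] (A : Matrix m k ℝ) :
    (A * Aᵀ).PosSemidef := by
  simpa only [conjTranspose_eq_transpose_of_trivial] using posSemidef_self_mul_conjTranspose A

section SineVectors

variable {n : ℕ}

lemma Emat_mulVec (t : ℕ → ℝ) :
    Emat n *ᵥ (fun l : Fin n => t l) = fun i : Fin (n - 1) => t ((i : ℕ) + 1) := by
  ext i
  rw [mulVec, dotProduct, Finset.sum_eq_single ⟨i + 1, by omega⟩]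
  · simp [Emat]
  · intro l _ hl
    rw [Emat, of_apply, if_neg fun h => hl (Fin.ext h), zero_mul]
  · simp

lemma Zmat_mulVec (t : ℕ → ℝ) :
    Zmat n *ᵥ (fun l : Fin n => t l) = fun i : Fin (n - 1) => t i := by
  ext i
  rw [mulVec, dotProduct, Finset.sum_eq_single ⟨i, by omega⟩]
  · simp [Zmat]
  · intro l _ hl
    rw [Zmat, of_apply, if_neg fun h => hl (Fin.ext h), zero_mul]
  · simp

lemma Emat_transpose_mulVec (s : ℕ → ℝ) (h0 : s 0 = 0) :
    (Emat n)ᵀ *ᵥ (fun i : Fin (n - 1) => s ((i : ℕ) + 1)) = fun l : Fin n => s l := by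
  ext l
  rcases Nat.eq_zero_or_pos (l : ℕ) with hl | hl
  · simp [mulVec, dotProduct, Emat, hl, h0]
  rw [mulVec, dotProduct, Finset.sum_eq_single ⟨l - 1, by omega⟩]
  · simp [Emat, Nat.sub_add_cancel hl]
  · intro i _ hi
    rw [transpose_apply, Emat, of_apply, if_neg, zero_mul]
    exact fun h => hi (Fin.ext (by simp only; omega))
  · simp

lemma Zmat_transpose_mulVec (s : ℕ → ℝ) (hn : s n = 0) :
    (Zmat n)ᵀ *ᵥ (fun i : Fin (n - 1) => s ((i : ℕ) + 1)) = fun l : Fin n => s ((l : ℕ) + 1) := by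
  ext l
  by_cases hl : (l : ℕ) + 1 = n
  · rw [hl, hn, mulVec, dotProduct]
    refine Finset.sum_eq_zero fun i _ => ?_
    rw [transpose_apply, Zmat, of_apply, if_neg (by omega), zero_mul]
  rw [mulVec, dotProduct, Finset.sum_eq_single ⟨l, by omega⟩]
  · simp [Zmat]
  · intro i _ hi
    rw [transpose_apply, Zmat, of_apply, if_neg fun h => hi (Fin.ext h.symm), zero_mul]
  · simp

lemma Gmat_mul_transpose_mulVec (s : ℕ → ℝ) (h0 : s 0 = 0) (hn : s n = 0) :
    (Gmat n * (Gmat n)ᵀ) *ᵥ (fun i : Fin (n - 1) => s ((i : ℕ) + 1)) =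
      fun i : Fin (n - 1) => 2 * s ((i : ℕ) + 1) - s i - s ((i : ℕ) + 2) := by
  rw [← mulVec_mulVec, Gmat, transpose_sub, sub_mulVec (Emat n)ᵀ, Emat_transpose_mulVec s h0,
    Zmat_transpose_mulVec s hn, mulVec_sub, sub_mulVec, sub_mulVec, Emat_mulVec, Zmat_mulVec,
    Emat_mulVec (fun m => s (m + 1)), Zmat_mulVec (fun m => s (m + 1))]
  ext i
  simp only [Pi.sub_apply]
  ring

lemma Hmat_mul_transpose_mulVec (s : ℕ → ℝ) (h0 : s 0 = 0) (hn : s n = 0) :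
    (Hmat n * (Hmat n)ᵀ) *ᵥ (fun i : Fin (n - 1) => s ((i : ℕ) + 1)) =
      fun i : Fin (n - 1) => 2 * s ((i : ℕ) + 1) + s i + s ((i : ℕ) + 2) := by
  rw [← mulVec_mulVec, Hmat, transpose_add, add_mulVec (Emat n)ᵀ, Emat_transpose_mulVec s h0,
    Zmat_transpose_mulVec s hn, mulVec_add, add_mulVec, add_mulVec, Emat_mulVec, Zmat_mulVec,
    Emat_mulVec (fun m => s (m + 1)), Zmat_mulVec (fun m => s (m + 1))]
  ext i
  simp only [Pi.add_apply]
  ring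

lemma sin_sub_add_sin_add (x θ : ℝ) : sin (x - θ) + sin (x + θ) = 2 * cos θ * sin x := by
  rw [sin_sub, sin_add]
  ring

noncomputable def sineAngle (n : ℕ) (k : Fin (n - 1)) : ℝ := ((k : ℕ) + 1) * π / n

noncomputable def sineMatrix (n : ℕ) : Matrix (Fin (n - 1)) (Fin (n - 1)) ℝ :=
  Matrix.of fun j k => sin (((j : ℕ) + 1) * sineAngle n k)

lemma sineAngle_mem_Ioo (k : Fin (n - 1)) : sineAngle n k ∈ Set.Ioo 0 π := by
  have hk : ((k : ℕ) + 1 : ℝ) < n := by exact_mod_cast (by have := k.2; omega : (k : ℕ) + 1 < n)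
  have hn : (0 : ℝ) < n := by linarith
  refine ⟨by unfold sineAngle; positivity, ?_⟩
  rw [sineAngle, div_lt_iff₀ hn]
  nlinarith [pi_pos]

lemma sin_nat_mul_sineAngle (k : Fin (n - 1)) : sin (n * sineAngle n k) = 0 := by
  have hn : (n : ℝ) ≠ 0 := by exact_mod_cast (by have := k.2; omega : n ≠ 0)
  rw [sineAngle, mul_div_cancel₀ _ hn]
  exact_mod_cast sin_nat_mul_pi ((k : ℕ) + 1)

lemma sineAngle_eq_two_mul (k : Fin (n - 1)) :
    sineAngle n k = 2 * (((k : ℕ) + 1) * π / (2 * n)) := by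
  rw [sineAngle]
  field_simp

lemma lamGG_eq (k : Fin (n - 1)) : lamGG n k = 2 - 2 * cos (sineAngle n k) := by
  rw [lamGG, sineAngle_eq_two_mul, sin_sq, cos_sq]
  ring

lemma muHH_eq (k : Fin (n - 1)) : muHH n k = 2 + 2 * cos (sineAngle n k) := by
  rw [muHH, sineAngle_eq_two_mul, cos_sq]
  ring

lemma lamGG_pos (k : Fin (n - 1)) : 0 < lamGG n k := by
  obtain ⟨h0, hπ⟩ := sineAngle_mem_Ioo k
  have := cos_lt_cos_of_nonneg_of_le_pi le_rfl hπ.le h0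
  rw [cos_zero] at this
  rw [lamGG_eq]
  linarith

lemma muHH_pos (k : Fin (n - 1)) : 0 < muHH n k := by
  obtain ⟨h0, hπ⟩ := sineAngle_mem_Ioo k
  have := cos_lt_cos_of_nonneg_of_le_pi h0.le le_rfl hπ
  rw [cos_pi] at this
  rw [muHH_eq]
  linarith

lemma lamGG_injective : Function.Injective (lamGG n) := by
  intro k l h
  rw [lamGG_eq, lamGG_eq] at h
  have hangle := injOn_cos (Set.Ioo_subset_Icc_self (sineAngle_mem_Ioo k))
    (Set.Ioo_subset_Icc_self (sineAngle_mem_Ioo l)) (by linarith)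
  have hn : (n : ℝ) ≠ 0 := by exact_mod_cast (by have := k.2; omega : n ≠ 0)
  rw [sineAngle, sineAngle, div_left_inj' hn, mul_left_inj' pi_ne_zero] at hangle
  exact Fin.ext (by exact_mod_cast add_right_cancel hangle)

lemma Gmat_mul_transpose_mul_sineMatrix :
    Gmat n * (Gmat n)ᵀ * sineMatrix n = sineMatrix n * diagonal (lamGG n) := by
  ext j k
  have hA := congrFun (Gmat_mul_transpose_mulVec (fun m : ℕ => sin (m * sineAngle n k))
    (by simp) (sin_nat_mul_sineAngle k)) j
  have hrec := sin_sub_add_sin_add (((j : ℕ) + 1) * sineAngle n k) (sineAngle n k)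
  push_cast at hA
  rw [mul_diagonal, lamGG_eq]
  refine hA.trans ?_
  simp only [sineMatrix, of_apply]
  ring_nf at hrec ⊢
  linarith

lemma Hmat_mul_transpose_mul_sineMatrix :
    Hmat n * (Hmat n)ᵀ * sineMatrix n = sineMatrix n * diagonal (muHH n) := by
  ext j k
  have hB := congrFun (Hmat_mul_transpose_mulVec (fun m : ℕ => sin (m * sineAngle n k))
    (by simp) (sin_nat_mul_sineAngle k)) j
  have hrec := sin_sub_add_sin_add (((j : ℕ) + 1) * sineAngle n k) (sineAngle n k)
  push_cast at hB
  rw [mul_diagonal, muHH_eq]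
  refine hB.trans ?_
  simp only [sineMatrix, of_apply]
  ring_nf at hrec ⊢
  linarith

lemma isUnit_sineMatrix : IsUnit (sineMatrix n) := by
  refine isUnit_of_mul_eq_mul_diagonal lamGG_injective (fun k hk => ?_)
    Gmat_mul_transpose_mul_sineMatrix
  have h0 := congrFun hk ⟨0, Nat.zero_lt_of_lt k.2⟩
  simp only [col_apply, sineMatrix, of_apply, Pi.zero_apply] at h0
  obtain ⟨hpos, hlt⟩ := sineAngle_mem_Ioo k
  exact (sin_pos_of_pos_of_lt_pi hpos hlt).ne' (by simpa using h0)

end SineVectors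

theorem stmt8_general (n : ℕ) :
    ((Gmat n * (Gmat n)ᵀ) ⊗ₖ (Hmat n * (Hmat n)ᵀ) +
        (Hmat n * (Hmat n)ᵀ) ⊗ₖ (Gmat n * (Gmat n)ᵀ)).PosDef ∧
    spectrum ℝ
        ((Gmat n * (Gmat n)ᵀ) ⊗ₖ (Hmat n * (Hmat n)ᵀ) +
          (Hmat n * (Hmat n)ᵀ) ⊗ₖ (Gmat n * (Gmat n)ᵀ)) =
      {x : ℝ | ∃ i j : Fin (n - 1), x = lamGG n i * muHH n j + muHH n i * lamGG n j} ∧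
    ∀ i j : Fin (n - 1), 0 < lamGG n i * muHH n j + muHH n i * lamGG n j := by
  have hpos (i j : Fin (n - 1)) : 0 < lamGG n i * muHH n j + muHH n i * lamGG n j := by
    have := lamGG_pos i; have := lamGG_pos j; have := muHH_pos i; have := muHH_pos j
    positivity
  have hspec : spectrum ℝ
      ((Gmat n * (Gmat n)ᵀ) ⊗ₖ (Hmat n * (Hmat n)ᵀ) +
        (Hmat n * (Hmat n)ᵀ) ⊗ₖ (Gmat n * (Gmat n)ᵀ)) =
      {x : ℝ | ∃ i j : Fin (n - 1), x = lamGG n i * muHH n j + muHH n i * lamGG n j} := by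
    rw [spectrum_eq_range_of_mul_eq_mul_diagonal (isUnit_sineMatrix.kronecker isUnit_sineMatrix)
      (kronecker_add_kronecker_mul_kronecker Gmat_mul_transpose_mul_sineMatrix
        Hmat_mul_transpose_mul_sineMatrix)]
    ext x
    simp [eq_comm]
  have hpsd := ((posSemidef_self_mul_transpose (Gmat n)).kronecker
    (posSemidef_self_mul_transpose (Hmat n))).add
      ((posSemidef_self_mul_transpose (Hmat n)).kronecker (posSemidef_self_mul_transpose (Gmat n)))
  have hunit : IsUnit ((Gmat n * (Gmat n)ᵀ) ⊗ₖ (Hmat n * (Hmat n)ᵀ) +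
      (Hmat n * (Hmat n)ᵀ) ⊗ₖ (Gmat n * (Gmat n)ᵀ)) := by
    rw [← spectrum.zero_notMem_iff ℝ, hspec]
    rintro ⟨i, j, h⟩
    exact (hpos i j).ne h
  exact ⟨hpsd.posDef_iff_isUnit.mpr hunit, hspec, hpos⟩

/-- `Δ₀ = (G Gᵀ) ⊗ (H Hᵀ) + (H Hᵀ) ⊗ (G Gᵀ)` is symmetric positive definite;
its eigenvalues (its real spectrum) are exactly the numbers `λ_i μ_j + μ_i λ_j`, and all
these numbers are strictly positive. -/
theorem stmt8 (n : ℕ) (hn : 2 ≤ n) :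
    ((Gmat n * (Gmat n)ᵀ) ⊗ₖ (Hmat n * (Hmat n)ᵀ) +
        (Hmat n * (Hmat n)ᵀ) ⊗ₖ (Gmat n * (Gmat n)ᵀ)).PosDef ∧
    spectrum ℝ
        ((Gmat n * (Gmat n)ᵀ) ⊗ₖ (Hmat n * (Hmat n)ᵀ) +
          (Hmat n * (Hmat n)ᵀ) ⊗ₖ (Gmat n * (Gmat n)ᵀ)) =
      {x : ℝ | ∃ i j : Fin (n - 1), x = lamGG n i * muHH n j + muHH n i * lamGG n j} ∧
    ∀ i j : Fin (n - 1), 0 < lamGG n i * muHH n j + muHH n i * lamGG n j :=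
  stmt8_general n
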